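/- Let Δ = [a, b) × [c, d) be an axis-parallel half-open rectangle with b − a ≥ 1 and d − c ≥ 1, and suppose there exist a₀ ∈ [a, b) and c₀ ∈ [c, d) such that (b, c₀)ᵀ ∈ Γ and (a₀, d)ᵀ ∈ Γ. If Δ ∩ Γ = ∅, then b − a < 1 + α and d − c < 1 + α, and hence μ(Δ) < (1 + α)² = 2 + α. -/

import Mathlib

open Set

/-- The inverse golden ratio `α = (√5 - 1)/2`. -/
noncomputable def invGolden : ℝ := (Real.sqrt 5 - 1) / 2

/-- The rotated lattice `Γ = Aℤ²`, where `A` has rows `(1, -α)` and `(α, 1)`,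
i.e. `A(n,m)ᵀ = (n - αm, αn + m)ᵀ`. -/
def Γ : Set (ℝ × ℝ) :=
  {p | ∃ n m : ℤ, p = ((n : ℝ) - invGolden * m, invGolden * n + m)}

/-!
Move the lattice point on the right edge of `Δ` by `-(1, α)`, and, if that lands below `Δ`,
further by `(-α, 1)`: when `b - a ≥ 1 + α` and `d - c ≥ 1` one of the two resulting lattice
points lies in `Δ`. Symmetrically, the lattice point on the top edge is moved by `(α, -1)` and,
if that lands right of `Δ`, further by `-(1, α)`. Hence an empty `Δ` has both sides shorter
than `1 + α`, and `(1 + α)² = 2 + α` because `α² = 1 - α`.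
-/

open Real

lemma invGolden_eq_neg_goldenConj : invGolden = -goldenConj := by
  unfold invGolden goldenConj
  ring

lemma invGolden_pos : 0 < invGolden := by
  simpa [invGolden_eq_neg_goldenConj] using goldenConj_neg

lemma invGolden_lt_one : invGolden < 1 := by
  simpa [invGolden_eq_neg_goldenConj, neg_lt] using neg_one_lt_goldenConj

lemma invGolden_sq : invGolden ^ 2 = 1 - invGolden := by
  rw [invGolden_eq_neg_goldenConj, neg_sq, goldenConj_sq]
  ring

lemma one_add_invGolden_sq : (1 + invGolden) ^ 2 = 2 + invGolden := by
  linear_combination invGolden_sq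

lemma add_mem_Γ {x y : ℝ} (h : (x, y) ∈ Γ) (k l : ℤ) :
    (x + (k - invGolden * l), y + (invGolden * k + l)) ∈ Γ := by
  obtain ⟨n, m, hnm⟩ := h
  obtain ⟨rfl, rfl⟩ := Prod.mk.inj hnm
  exact ⟨n + k, m + l, by push_cast; ext <;> ring⟩

lemma sub_one_sub_invGolden_mem_Γ {x y : ℝ} (h : (x, y) ∈ Γ) :
    (x - 1, y - invGolden) ∈ Γ := by
  convert add_mem_Γ h (-1) 0 using 2 <;> push_cast <;> ring

lemma sub_invGolden_add_one_mem_Γ {x y : ℝ} (h : (x, y) ∈ Γ) :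
    (x - invGolden, y + 1) ∈ Γ := by
  convert add_mem_Γ h 0 1 using 2 <;> push_cast <;> ring

lemma add_invGolden_sub_one_mem_Γ {x y : ℝ} (h : (x, y) ∈ Γ) :
    (x + invGolden, y - 1) ∈ Γ := by
  convert add_mem_Γ h 0 (-1) using 2 <;> push_cast <;> ring

section

variable {a b c d : ℝ}

lemma Γ_inter_rect_nonempty_of_right_edge {c₀ : ℝ} (hc₀ : c₀ ∈ Ico c d) (hb : (b, c₀) ∈ Γ)
    (hab : 1 + invGolden ≤ b - a) (hcd : 1 ≤ d - c) :
    ((Ico a b ×ˢ Ico c d) ∩ Γ).Nonempty := by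
  have := invGolden_pos
  have := invGolden_lt_one
  obtain ⟨hcc₀, hc₀d⟩ := hc₀
  have hstep := sub_one_sub_invGolden_mem_Γ hb
  by_cases hlow : c + invGolden ≤ c₀
  · exact ⟨_, ⟨⟨by linarith, by linarith⟩, ⟨by linarith, by linarith⟩⟩, hstep⟩
  · exact ⟨_, ⟨⟨by linarith, by linarith⟩, ⟨by linarith, by linarith⟩⟩,
      sub_invGolden_add_one_mem_Γ hstep⟩

lemma Γ_inter_rect_nonempty_of_top_edge {a₀ : ℝ} (ha₀ : a₀ ∈ Ico a b) (hd : (a₀, d) ∈ Γ)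
    (hab : 1 ≤ b - a) (hcd : 1 + invGolden ≤ d - c) :
    ((Ico a b ×ˢ Ico c d) ∩ Γ).Nonempty := by
  have := invGolden_pos
  have := invGolden_lt_one
  obtain ⟨haa₀, ha₀b⟩ := ha₀
  have hstep := add_invGolden_sub_one_mem_Γ hd
  by_cases hright : a₀ < b - invGolden
  · exact ⟨_, ⟨⟨by linarith, by linarith⟩, ⟨by linarith, by linarith⟩⟩, hstep⟩
  · exact ⟨_, ⟨⟨by linarith, by linarith⟩, ⟨by linarith, by linarith⟩⟩,
      sub_one_sub_invGolden_mem_Γ hstep⟩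

end

/-- Let `Δ = [a,b) × [c,d)` with `b - a ≥ 1` and `d - c ≥ 1`, and suppose
there are `a₀ ∈ [a,b)` and `c₀ ∈ [c,d)` with `(b, c₀)ᵀ ∈ Γ` and
`(a₀, d)ᵀ ∈ Γ`. If `Δ ∩ Γ = ∅`, then `b - a < 1 + α` and `d - c < 1 + α`,
hence `μ(Δ) < (1 + α)² = 2 + α`. -/
theorem empty_rect_side_bounds (a b c d : ℝ)
    (hab : 1 ≤ b - a) (hcd : 1 ≤ d - c)
    (hbc₀ : ∃ c₀ ∈ Ico c d, ((b, c₀) : ℝ × ℝ) ∈ Γ)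
    (ha₀d : ∃ a₀ ∈ Ico a b, ((a₀, d) : ℝ × ℝ) ∈ Γ)
    (hempty : (Ico a b ×ˢ Ico c d) ∩ Γ = ∅) :
    b - a < 1 + invGolden ∧ d - c < 1 + invGolden ∧
      (b - a) * (d - c) < (1 + invGolden) ^ 2 ∧
      (1 + invGolden) ^ 2 = 2 + invGolden := by
  obtain ⟨c₀, hc₀, hb⟩ := hbc₀
  obtain ⟨a₀, ha₀, hd⟩ := ha₀d
  have hba : b - a < 1 + invGolden := by
    by_contra! h
    exact (Γ_inter_rect_nonempty_of_right_edge hc₀ hb h hcd).ne_empty hempty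
  have hdc : d - c < 1 + invGolden := by
    by_contra! h
    exact (Γ_inter_rect_nonempty_of_top_edge ha₀ hd hab h).ne_empty hempty
  refine ⟨hba, hdc, ?_, one_add_invGolden_sq⟩
  calc (b - a) * (d - c) < (1 + invGolden) * (1 + invGolden) :=
        mul_lt_mul'' hba hdc (by linarith) (by linarith)
    _ = (1 + invGolden) ^ 2 := (sq _).symm
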